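/- With h(λ) = Σ_a (h_a/(λ-z_a) + ξ z_a X⁺_a), X⁻(λ) = Σ_a (X⁻_a/(λ-z_a) - (ξ/2)λ h_a), X⁺(λ) = Σ_a X⁺_a/(λ-z_a), where {h_a, X±_a} are commuting copies of sl2 at sites a = 1,…,N and z_1,…,z_N are distinct complex numbers, the commutation relation [h(λ), h(μ)] = 2ξ(λX⁺(λ) - μX⁺(μ)) holds for λ, μ ∉ {z_1,…,z_N}. -/

import Mathlib

noncomputable section

/-- The current `h(λ) = Σ_a (h_a/(λ-z_a) + ξ z_a X⁺_a)`. -/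
def hCur {A : Type*} [Ring A] [Algebra ℂ A] {N : ℕ} (z : Fin N → ℂ) (ξ : ℂ)
    (H Xp : Fin N → A) (l : ℂ) : A :=
  ∑ a, ((l - z a)⁻¹ • H a + (ξ * z a) • Xp a)

/-- The current `X⁻(λ) = Σ_a (X⁻_a/(λ-z_a) - (ξ/2)λ h_a)`. -/
def XmCur {A : Type*} [Ring A] [Algebra ℂ A] {N : ℕ} (z : Fin N → ℂ) (ξ : ℂ)
    (H Xm : Fin N → A) (l : ℂ) : A :=
  ∑ a, ((l - z a)⁻¹ • Xm a - (ξ / 2 * l) • H a)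

/-- The current `X⁺(λ) = Σ_a X⁺_a/(λ-z_a)`. -/
def XpCur {A : Type*} [Ring A] [Algebra ℂ A] {N : ℕ} (z : Fin N → ℂ)
    (Xp : Fin N → A) (l : ℂ) : A :=
  ∑ a, (l - z a)⁻¹ • Xp a

/-- The λ-derivative `h'(λ) = -Σ_a h_a/(λ-z_a)²` of the current `h(λ)`. -/
def hdCur {A : Type*} [Ring A] [Algebra ℂ A] {N : ℕ} (z : Fin N → ℂ)
    (H : Fin N → A) (l : ℂ) : A :=
  ∑ a, (-((l - z a) ^ 2)⁻¹) • H a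

/-- The generating function `t(λ) = h(λ)² - 2h'(λ) + 2(2X⁻(λ) + ξλ)X⁺(λ)`. -/
def tCur {A : Type*} [Ring A] [Algebra ℂ A] {N : ℕ} (z : Fin N → ℂ) (ξ : ℂ)
    (H Xp Xm : Fin N → A) (l : ℂ) : A :=
  hCur z ξ H Xp l * hCur z ξ H Xp l - (2 : ℂ) • hdCur z H l +
    ((2 : ℂ) • ((2 : ℂ) • XmCur z ξ H Xm l + (ξ * l) • (1 : A))) * XpCur z Xp l

/-- The sl₂ relations at every site, and commutativity of generators at distinct sites. -/
def GaudinSites {A : Type*} [Ring A] [Algebra ℂ A] {N : ℕ}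
    (H Xp Xm : Fin N → A) : Prop :=
  (∀ a, H a * Xp a - Xp a * H a = (2 : ℂ) • Xp a) ∧
  (∀ a, Xp a * Xm a - Xm a * Xp a = H a) ∧
  (∀ a, H a * Xm a - Xm a * H a = (-2 : ℂ) • Xm a) ∧
  (∀ a b, a ≠ b → ∀ x ∈ ({H a, Xp a, Xm a} : Set A), ∀ y ∈ ({H b, Xp b, Xm b} : Set A),
    Commute x y)


private lemma diag_comm' {A : Type*} [Ring A] [Algebra ℂ A] (h x : A)
    (hrel : h * x - x * h = (2:ℂ) • x) (α β γ : ℂ) :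
    (α • h + β • x) * (γ • h + β • x) - (γ • h + β • x) * (α • h + β • x)
      = (2 * β * (α - γ)) • x := by
  have hx : h * x = x * h + (2:ℂ) • x := by rw [← hrel]; abel
  simp only [add_mul, mul_add, smul_mul_assoc, mul_smul_comm, smul_smul, hx, smul_add]
  module

/-- `[h(λ), h(μ)] = 2ξ(λX⁺(λ) - μX⁺(μ))`. -/
theorem hCur_comm {A : Type*} [Ring A] [Algebra ℂ A] {N : ℕ} (z : Fin N → ℂ) (ξ : ℂ)
    (H Xp Xm : Fin N → A) (hz : Function.Injective z) (hG : GaudinSites H Xp Xm)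
    (l m : ℂ) (hl : l ∉ Set.range z) (hm : m ∉ Set.range z) :
    hCur z ξ H Xp l * hCur z ξ H Xp m - hCur z ξ H Xp m * hCur z ξ H Xp l =
      (2 * ξ) • (l • XpCur z Xp l - m • XpCur z Xp m) := by
  unfold hCur XpCur
  obtain ⟨h1, -, -, hcomm⟩ := hG
  have hlz : ∀ a, l - z a ≠ 0 := fun a => sub_ne_zero.mpr fun e => hl ⟨a, e.symm⟩
  have hmz : ∀ a, m - z a ≠ 0 := fun a => sub_ne_zero.mpr fun e => hm ⟨a, e.symm⟩
  set f : Fin N → A := fun a => (l - z a)⁻¹ • H a + (ξ * z a) • Xp a with hf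
  set g : Fin N → A := fun a => (m - z a)⁻¹ • H a + (ξ * z a) • Xp a with hg
  have hfg : ∀ a b, a ≠ b → Commute (f a) (g b) := by
    intro a b hab
    have cHH := hcomm a b hab (H a) (by simp) (H b) (by simp)
    have cHX := hcomm a b hab (H a) (by simp) (Xp b) (by simp)
    have cXH := hcomm a b hab (Xp a) (by simp) (H b) (by simp)
    have cXX := hcomm a b hab (Xp a) (by simp) (Xp b) (by simp)
    have c1 : Commute (H a) (g b) := ((cHH.smul_right _).add_right ((cHX.smul_right _)))
    have c2 : Commute (Xp a) (g b) := ((cXH.smul_right _).add_right ((cXX.smul_right _)))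
    exact (c1.smul_left _).add_left (c2.smul_left _)
  have expand : (∑ a, f a) * (∑ a, g a) - (∑ a, g a) * (∑ a, f a)
      = ∑ a, ∑ b, (f a * g b - g b * f a) := by
    rw [Finset.sum_mul_sum, Finset.sum_mul_sum, Finset.sum_comm (f := fun b a => g b * f a),
      ← Finset.sum_sub_distrib]
    exact Finset.sum_congr rfl fun a _ => (Finset.sum_sub_distrib _ _).symm
  rw [expand]
  have inner : ∀ a ∈ Finset.univ, ∑ b, (f a * g b - g b * f a)
      = (2 * ξ * (l * (l - z a)⁻¹ - m * (m - z a)⁻¹)) • Xp a := by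
    intro a _
    rw [Finset.sum_eq_single a (fun b _ hb => sub_eq_zero.mpr (hfg a b (Ne.symm hb)).eq)
      (fun h => absurd (Finset.mem_univ a) h)]
    have := diag_comm' (H a) (Xp a) (h1 a) (l - z a)⁻¹ (ξ * z a) (m - z a)⁻¹
    rw [hf, hg]
    simp only []
    rw [this]
    congr 1
    field_simp [hlz a, hmz a]
    ring
  rw [Finset.sum_congr rfl inner, Finset.smul_sum, Finset.smul_sum, ← Finset.sum_sub_distrib,
    Finset.smul_sum]
  exact Finset.sum_congr rfl fun a _ => by rw [smul_smul, smul_smul, ← sub_smul, smul_smul]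


end
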